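/- arXiv:2112.03191 — 2 statements merged into one kernel-verified Lean document; each statement's English description precedes it below -/
import Mathlib

section
/- For every natural number n there exists a constant c > 0 such that (∫_ℝ σ(x) e^{−μx²} dx)^{n/2} = (π/μ)^{n/4} + O(e^{−cμ}) as μ → +∞, where the powers are real powers (well defined since the integral and π/μ are positive for μ > 0). -/
open MeasureTheory Filter Asymptotics Real

/-!
Write `G = ∫ e^{-μx²} = √(π/μ)` and `a = ∫ σ e^{-μx²}`, so `G^{n/2} = (π/μ)^{n/4}`.
Since `1 - σ` vanishes on `[-r, r]` and `e^{-μx²} ≤ e^{-r²μ/2} e^{-μx²/2}` for `|x| ≥ r`,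
`0 ≤ G - a ≤ e^{-r²μ/2} √(2π/μ) = √2 e^{-r²μ/2} G`. The relative error `1 - a/G` is therefore
exponentially small, and for `p = n/2`, `G^p - a^p = G^p (1 - (a/G)^p) ≤ (p + 1) G^p (1 - a/G)` with `G ≤ 1`
for `μ ≥ π`.
-/

lemma one_sub_rpow_le_mul_one_sub {t p : ℝ} (hp : 0 ≤ p) (ht0 : 0 ≤ t) (ht1 : t ≤ 1) :
    1 - t ^ p ≤ (p + 1) * (1 - t) := by
  rcases le_total p 1 with hp1 | hp1
  · have h : t ^ p ≥ t := by
      simpa using rpow_le_rpow_of_exponent_ge' ht0 ht1 hp hp1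
    nlinarith
  · have h := one_add_mul_self_le_rpow_one_add (s := t - 1) (by linarith) hp1
    rw [add_sub_cancel] at h
    nlinarith

lemma rpow_sub_rpow_le_mul_one_sub_div {a b p : ℝ} (hp : 0 ≤ p) (ha : 0 ≤ a) (hab : a ≤ b)
    (hb : 0 < b) : b ^ p - a ^ p ≤ (p + 1) * b ^ p * (1 - a / b) := by
  have hratio : a ^ p = b ^ p * (a / b) ^ p := by
    rw [← mul_rpow hb.le (div_nonneg ha hb.le), mul_div_cancel₀ a hb.ne']
  have hbp : 0 ≤ b ^ p := rpow_nonneg hb.le p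
  have hkey := one_sub_rpow_le_mul_one_sub hp (div_nonneg ha hb.le) ((div_le_one hb).2 hab)
  calc b ^ p - a ^ p = b ^ p * (1 - (a / b) ^ p) := by rw [hratio]; ring
    _ ≤ b ^ p * ((p + 1) * (1 - a / b)) := mul_le_mul_of_nonneg_left hkey hbp
    _ = (p + 1) * b ^ p * (1 - a / b) := by ring

section GaussianWeight

variable {σ : ℝ → ℝ} {μ : ℝ}

lemma integrable_bdd_mul_exp_neg_mul_sq (hσ_meas : Measurable σ) (hσ_nonneg : ∀ x, 0 ≤ σ x)
    (hσ_le_one : ∀ x, σ x ≤ 1) (hμ : 0 < μ) :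
    Integrable fun x => σ x * exp (-μ * x ^ 2) :=
  (integrable_exp_neg_mul_sq hμ).bdd_mul hσ_meas.aestronglyMeasurable
    (c := 1) (ae_of_all _ fun x => by
      rw [norm_of_nonneg (hσ_nonneg x)]; exact hσ_le_one x)

lemma integral_mul_exp_neg_mul_sq_le_sqrt (hσ_nonneg : ∀ x, 0 ≤ σ x)
    (hσ_le_one : ∀ x, σ x ≤ 1) (hμ : 0 < μ) :
    ∫ x, σ x * exp (-μ * x ^ 2) ≤ √(π / μ) := by
  rw [← integral_gaussian]
  refine integral_mono_of_nonneg (ae_of_all _ fun x => mul_nonneg (hσ_nonneg x) (exp_pos _).le)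
    (integrable_exp_neg_mul_sq hμ) (ae_of_all _ fun x => ?_)
  exact mul_le_of_le_one_left (exp_pos _).le (hσ_le_one x)

lemma one_sub_mul_exp_neg_mul_sq_le {r : ℝ} (hr : 0 ≤ r) (hσ_nonneg : ∀ x, 0 ≤ σ x)
    (hσ_one : ∀ x, |x| ≤ r → σ x = 1) (hμ : 0 < μ) (x : ℝ) :
    (1 - σ x) * exp (-μ * x ^ 2) ≤ exp (-(r ^ 2 / 2) * μ) * exp (-(μ / 2) * x ^ 2) := by
  rcases le_or_gt |x| r with hx | hx
  · rw [hσ_one x hx, sub_self, zero_mul]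
    positivity
  · have hrx : r ^ 2 ≤ x ^ 2 := by
      simpa [sq_abs] using pow_le_pow_left₀ hr hx.le 2
    have hsplit : exp (-μ * x ^ 2) ≤ exp (-(r ^ 2 / 2) * μ) * exp (-(μ / 2) * x ^ 2) := by
      rw [← exp_add, exp_le_exp]
      nlinarith
    calc (1 - σ x) * exp (-μ * x ^ 2) ≤ exp (-μ * x ^ 2) :=
          mul_le_of_le_one_left (exp_pos _).le (by linarith [hσ_nonneg x])
      _ ≤ _ := hsplit

lemma sqrt_pi_div_sub_integral_mul_exp_neg_mul_sq_le {r : ℝ} (hr : 0 ≤ r)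
    (hσ_meas : Measurable σ) (hσ_nonneg : ∀ x, 0 ≤ σ x) (hσ_le_one : ∀ x, σ x ≤ 1)
    (hσ_one : ∀ x, |x| ≤ r → σ x = 1) (hμ : 0 < μ) :
    √(π / μ) - ∫ x, σ x * exp (-μ * x ^ 2) ≤ √2 * exp (-(r ^ 2 / 2) * μ) * √(π / μ) := by
  have hint := integrable_exp_neg_mul_sq hμ
  have hintσ := integrable_bdd_mul_exp_neg_mul_sq hσ_meas hσ_nonneg hσ_le_one hμ
  have hdiff : √(π / μ) - ∫ x, σ x * exp (-μ * x ^ 2)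
      = ∫ x, (1 - σ x) * exp (-μ * x ^ 2) := by
    rw [← integral_gaussian, ← integral_sub hint hintσ]
    congr 1 with x
    ring
  have hhalf : √(π / (μ / 2)) = √2 * √(π / μ) := by
    rw [← sqrt_mul zero_le_two]
    congr 1
    field_simp
  rw [hdiff]
  calc ∫ x, (1 - σ x) * exp (-μ * x ^ 2)
      ≤ ∫ x, exp (-(r ^ 2 / 2) * μ) * exp (-(μ / 2) * x ^ 2) := by
        refine integral_mono ?_ ((integrable_exp_neg_mul_sq (by positivity)).const_mul _)
          (one_sub_mul_exp_neg_mul_sq_le hr hσ_nonneg hσ_one hμ)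
        simp only [sub_mul, one_mul]
        exact hint.sub hintσ
    _ = √2 * exp (-(r ^ 2 / 2) * μ) * √(π / μ) := by
        rw [integral_const_mul, integral_gaussian, hhalf]
        ring

end GaussianWeight

theorem stmt_3_general (r : ℝ) (hr : 0 < r) (σ : ℝ → ℝ) (hσ_meas : Measurable σ)
    (hσ_nonneg : ∀ x, 0 ≤ σ x) (hσ_le_one : ∀ x, σ x ≤ 1)
    (hσ_one : ∀ x, |x| ≤ r → σ x = 1)
    (n : ℕ) :
    ∃ c : ℝ, 0 < c ∧
      (fun μ : ℝ =>
          (∫ x : ℝ, σ x * Real.exp (-μ * x ^ 2)) ^ ((n : ℝ) / 2)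
            - (π / μ) ^ ((n : ℝ) / 4))
        =O[atTop] fun μ : ℝ => Real.exp (-c * μ) := by
  set p : ℝ := (n : ℝ) / 2 with hp_def
  have hp : 0 ≤ p := by positivity
  refine ⟨r ^ 2 / 2, by positivity, IsBigO.of_bound ((p + 1) * √2) ?_⟩
  filter_upwards [eventually_ge_atTop π] with μ hμ
  have hμ0 : 0 < μ := pi_pos.trans_le hμ
  set a := ∫ x, σ x * exp (-μ * x ^ 2)
  set G := √(π / μ) with hG_def
  set E := exp (-(r ^ 2 / 2) * μ)
  have hG0 : 0 < G := sqrt_pos.2 (by positivity)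
  have hGp : G ^ p = (π / μ) ^ ((n : ℝ) / 4) := by
    rw [hG_def, sqrt_eq_rpow, ← rpow_mul (by positivity), hp_def]
    ring_nf
  have hGp_le_one : G ^ p ≤ 1 :=
    rpow_le_one hG0.le (sqrt_le_one.2 ((div_le_one hμ0).2 hμ)) hp
  have ha0 : 0 ≤ a := integral_nonneg fun x => mul_nonneg (hσ_nonneg x) (exp_pos _).le
  have haG : a ≤ G := integral_mul_exp_neg_mul_sq_le_sqrt hσ_nonneg hσ_le_one hμ0
  have hrel : 1 - a / G ≤ √2 * E := by
    rw [one_sub_div hG0.ne', div_le_iff₀ hG0]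
    exact sqrt_pi_div_sub_integral_mul_exp_neg_mul_sq_le hr.le hσ_meas hσ_nonneg hσ_le_one
      hσ_one hμ0
  rw [← hGp, norm_of_nonneg (exp_pos _).le, norm_sub_rev,
    norm_of_nonneg (sub_nonneg.2 (rpow_le_rpow ha0 haG hp))]
  calc G ^ p - a ^ p ≤ (p + 1) * G ^ p * (1 - a / G) :=
        rpow_sub_rpow_le_mul_one_sub_div hp ha0 haG hG0
    _ ≤ (p + 1) * 1 * (√2 * E) := by
        gcongr
        linarith [div_le_one_of_le₀ haG hG0.le]
    _ = (p + 1) * √2 * E := by ring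

/-- For every `n : ℕ` there is a constant `c > 0` such that
`(∫ σ(x) e^{-μ x²} dx)^{n/2} = (π/μ)^{n/4} + O(e^{-cμ})` as `μ → +∞`,
where the powers are real powers. -/
theorem stmt_3 (r : ℝ) (hr : 0 < r) (σ : ℝ → ℝ) (hσ_meas : Measurable σ)
    (hσ_nonneg : ∀ x, 0 ≤ σ x) (hσ_le_one : ∀ x, σ x ≤ 1)
    (hσ_one : ∀ x, |x| ≤ r → σ x = 1) (hσ_zero : ∀ x, 2 * r ≤ |x| → σ x = 0)
    (n : ℕ) :
    ∃ c : ℝ, 0 < c ∧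
      (fun μ : ℝ =>
          (∫ x : ℝ, σ x * Real.exp (-μ * x ^ 2)) ^ ((n : ℝ) / 2)
            - (π / μ) ^ ((n : ℝ) / 4))
        =O[atTop] fun μ : ℝ => Real.exp (-c * μ) :=
  stmt_3_general r hr σ hσ_meas hσ_nonneg hσ_le_one hσ_one n
end

section
/- If moreover the range of P(t) is finite-dimensional, then the range of P′ is finite-dimensional and dim(range P′) ≤ 2 · dim(range P(t)). -/
/-!
Differentiating `P s * P s = P s` at `t` gives `P' = P' P(t) + P(t) P'`. Hence every vector
`P' y = P' (P(t) y) + P(t) (P' y)` lies in `P'(range P(t)) + range P(t)`, a sum of two spaces of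
dimension at most `dim (range P(t))`.
-/

open Module Submodule

theorem HasDerivAt.eq_mul_add_mul_of_isIdempotentElem {𝕜 𝔸 : Type*} [NontriviallyNormedField 𝕜]
    [NormedRing 𝔸] [NormedAlgebra 𝕜 𝔸] {P : 𝕜 → 𝔸} {P' : 𝔸} {t : 𝕜}
    (hproj : ∀ s, IsIdempotentElem (P s)) (hP : HasDerivAt P P' t) :
    P' = P' * P t + P t * P' := by
  have hsq : HasDerivAt (P * P) (P' * P t + P t * P') t := hP.mul hP
  rw [show P * P = P from funext hproj] at hsq
  exact hP.unique hsq

namespace LinearMap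

variable {K V : Type*} [DivisionRing K] [AddCommGroup V] [Module K V] {p d : Module.End K V}

theorem range_le_map_range_sup_range_of_eq_mul_add_mul (h : d = d * p + p * d) :
    range d ≤ (range p).map d ⊔ range p := by
  rintro _ ⟨y, rfl⟩
  have hy : d y = d (p y) + p (d y) := congr($h y)
  rw [hy]
  exact add_mem_sup (mem_map_of_mem (mem_range_self p y)) (mem_range_self p (d y))

theorem finiteDimensional_range_of_eq_mul_add_mul [FiniteDimensional K (range p)]
    (h : d = d * p + p * d) : FiniteDimensional K (range d) :=
  finiteDimensional_of_le (range_le_map_range_sup_range_of_eq_mul_add_mul h)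

theorem finrank_range_le_two_mul_of_eq_mul_add_mul [FiniteDimensional K (range p)]
    (h : d = d * p + p * d) : finrank K (range d) ≤ 2 * finrank K (range p) :=
  calc finrank K (range d)
      ≤ finrank K ((range p).map d ⊔ range p : Submodule K V) :=
        finrank_mono (range_le_map_range_sup_range_of_eq_mul_add_mul h)
    _ ≤ finrank K ((range p).map d) + finrank K (range p) :=
        finrank_add_le_finrank_add_finrank _ _
    _ ≤ finrank K (range p) + finrank K (range p) :=
        Nat.add_le_add_right (finrank_map_le _ _) _
    _ = 2 * finrank K (range p) := (two_mul _).symm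

end LinearMap

theorem stmt_14_general {E : Type*} [NormedAddCommGroup E] [NormedSpace ℂ E]
    (P : ℝ → (E →L[ℂ] E)) (t : ℝ) (P' : E →L[ℂ] E)
    (hproj : ∀ s : ℝ, P s ∘L P s = P s)
    (hdiff : HasDerivAt P P' t)
    (hfin : FiniteDimensional ℂ (LinearMap.range (P t : E →ₗ[ℂ] E))) :
    FiniteDimensional ℂ (LinearMap.range (P' : E →ₗ[ℂ] E)) ∧
      Module.finrank ℂ (LinearMap.range (P' : E →ₗ[ℂ] E))
        ≤ 2 * Module.finrank ℂ (LinearMap.range (P t : E →ₗ[ℂ] E)) := by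
  have hP' := hdiff.eq_mul_add_mul_of_isIdempotentElem hproj
  have hlin : (P' : E →ₗ[ℂ] E) = P' * P t + P t * P' := congr(($hP' : E →ₗ[ℂ] E))
  exact ⟨LinearMap.finiteDimensional_range_of_eq_mul_add_mul hlin,
    LinearMap.finrank_range_le_two_mul_of_eq_mul_add_mul hlin⟩

/-- If the range of the projection `P(t)` is finite-dimensional, then the range
of the derivative `P′` is finite-dimensional with
`dim (range P′) ≤ 2 · dim (range P(t))`. -/
theorem stmt_14 {E : Type*} [NormedAddCommGroup E] [NormedSpace ℂ E]
    [CompleteSpace E] (P : ℝ → (E →L[ℂ] E)) (t : ℝ) (P' : E →L[ℂ] E)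
    (hproj : ∀ s : ℝ, P s ∘L P s = P s)
    (hdiff : HasDerivAt P P' t)
    (hfin : FiniteDimensional ℂ (LinearMap.range (P t : E →ₗ[ℂ] E))) :
    FiniteDimensional ℂ (LinearMap.range (P' : E →ₗ[ℂ] E)) ∧
      Module.finrank ℂ (LinearMap.range (P' : E →ₗ[ℂ] E))
        ≤ 2 * Module.finrank ℂ (LinearMap.range (P t : E →ₗ[ℂ] E)) :=
  stmt_14_general P t P' hproj hdiff hfin
end
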